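/- Let a single-coalition-first neighborhood model be given, with derived neighborhood functions nei_C. Then the following two conditions are equivalent: (1) there is a state r such that for every agent a and every state s there is a unique {a}-history from r to s; (2) there is a state r such that for every coalition C and every state s there is a unique C-history from r to s. -/
import Mathlib


/-- `Δ` is a cover of `X` if `⋃ Δ = X` and `∅ ∉ Δ`. -/
def IsCover {S : Type} (Δ : Set (Set S)) (X : Set S) : Prop :=
  ⋃₀ Δ = X ∧ ∅ ∉ Δ

open Classical in
/-- The derived neighborhood functions of a single-coalition-first
neighborhood model. -/
noncomputable def dNei {AG S : Type} (suc : S → Set S)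
    (nei : AG → S → Set (Set S)) (C : Set AG) (s : S) : Set (Set S) :=
  if suc s = ∅ then ∅
  else if C = ∅ then {suc s}
  else {Y : Set S | Y.Nonempty ∧
    ∃ X : ↥C → Set S, (∀ a : ↥C, X a ∈ nei a.1 s) ∧ Y = ⋂ a : ↥C, X a}

/-- `nHist suc nei C r L t` says that `L` is a `C`-history from `r` to `t` in
a single-coalition-first neighborhood model. -/
def nHist {AG S : Type} (suc : S → Set S) (nei : AG → S → Set (Set S))
    (C : Set AG) : S → List (Set S × S) → S → Prop
  | r, [], t => t = r
  | r, (Y, u) :: L, t => Y ∈ dNei suc nei C r ∧ u ∈ Y ∧ nHist suc nei C u L t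

section Aux

variable {AG S : Type} {suc : S → Set S} {nei : AG → S → Set (Set S)}

/-- Members of derived neighborhoods are subsets of the successor set. -/
lemma dNei_subset (hnei : ∀ (a : AG) (s : S), IsCover (nei a s) (suc s))
    {C : Set AG} {s : S} {Y : Set S} (hY : Y ∈ dNei suc nei C s) :
    Y ⊆ suc s := by
  unfold dNei at hY
  by_cases h0 : suc s = ∅
  · rw [if_pos h0] at hY; exact absurd hY (Set.notMem_empty _)
  · rw [if_neg h0] at hY
    by_cases hC : C = ∅
    · rw [if_pos hC] at hY
      simp only [Set.mem_singleton_iff] at hY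
      exact hY ▸ le_refl _
    · rw [if_neg hC] at hY
      obtain ⟨-, X, hX, rfl⟩ := hY
      obtain ⟨a, ha⟩ := Set.nonempty_iff_ne_empty.mpr hC
      refine (Set.iInter_subset _ ⟨a, ha⟩).trans ?_
      rw [← (hnei a s).1]
      exact Set.subset_sUnion_of_mem (hX ⟨a, ha⟩)

/-- Members of `nei a s` are in the derived singleton neighborhood. -/
lemma mem_dNei_singleton (hnei : ∀ (a : AG) (s : S), IsCover (nei a s) (suc s))
    {a : AG} {s : S} {X : Set S} (hX : X ∈ nei a s) :
    X ∈ dNei suc nei {a} s := by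
  have hXne : X.Nonempty := by
    rcases X.eq_empty_or_nonempty with h | h
    · exact absurd (h ▸ hX) (hnei a s).2
    · exact h
  have hXsub : X ⊆ suc s := by
    rw [← (hnei a s).1]; exact Set.subset_sUnion_of_mem hX
  have h0 : suc s ≠ ∅ := Set.nonempty_iff_ne_empty.mp (hXne.mono hXsub)
  have hC : ({a} : Set AG) ≠ ∅ := Set.singleton_ne_empty a
  unfold dNei
  rw [if_neg h0, if_neg hC]
  refine ⟨hXne, fun _ => X, fun _ => ?_, ?_⟩
  · rename_i b
    have : b.1 = a := b.2
    rw [this]; exact hX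
  · haveI : Nonempty (({a} : Set AG)) := ⟨⟨a, rfl⟩⟩
    exact (Set.iInter_const X).symm

/-- One step exists for any coalition. -/
lemma dNei_step_exists (hnei : ∀ (a : AG) (s : S), IsCover (nei a s) (suc s))
    (C : Set AG) {s u : S} (hu : u ∈ suc s) :
    ∃ Y ∈ dNei suc nei C s, u ∈ Y := by
  have h0 : suc s ≠ ∅ := Set.nonempty_iff_ne_empty.mp ⟨u, hu⟩
  by_cases hC : C = ∅
  · refine ⟨suc s, ?_, hu⟩
    unfold dNei; rw [if_neg h0, if_pos hC]; rfl
  · have hch : ∀ a : ↥C, ∃ X ∈ nei a.1 s, u ∈ X := by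
      intro a
      have : u ∈ ⋃₀ nei a.1 s := (hnei a.1 s).1 ▸ hu
      obtain ⟨X, hX, hux⟩ := this
      exact ⟨X, hX, hux⟩
    choose X hX hux using hch
    refine ⟨⋂ a : ↥C, X a, ?_, Set.mem_iInter.mpr hux⟩
    unfold dNei; rw [if_neg h0, if_neg hC]
    exact ⟨⟨u, Set.mem_iInter.mpr hux⟩, X, hX, rfl⟩

/-- Appending a step to a history. -/
lemma nHist_append {C : Set AG} {r s u : S} {L : List (Set S × S)} {Y : Set S}
    (hL : nHist suc nei C r L s) (hY : Y ∈ dNei suc nei C s) (hu : u ∈ Y) :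
    nHist suc nei C r (L ++ [(Y, u)]) u := by
  induction L generalizing r with
  | nil =>
    have : s = r := hL
    subst this
    exact ⟨hY, hu, rfl⟩
  | cons p T ih =>
    obtain ⟨Y', u'⟩ := p
    obtain ⟨h1, h2, h3⟩ := hL
    exact ⟨h1, h2, ih h3⟩

/-- Histories can be relabelled between coalitions, keeping the state path. -/
lemma nHist_transfer (hnei : ∀ (a : AG) (s : S), IsCover (nei a s) (suc s))
    {C : Set AG} (C' : Set AG) {r s : S} {L : List (Set S × S)}
    (hL : nHist suc nei C r L s) :
    ∃ L', nHist suc nei C' r L' s ∧ L'.map Prod.snd = L.map Prod.snd := by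
  induction L generalizing r with
  | nil => exact ⟨[], hL, rfl⟩
  | cons p T ih =>
    obtain ⟨Y, u⟩ := p
    obtain ⟨h1, h2, h3⟩ := hL
    have hu : u ∈ suc r := dNei_subset hnei h1 h2
    obtain ⟨Y', hY', hu'⟩ := dNei_step_exists hnei C' hu
    obtain ⟨L', hL', hmap⟩ := ih h3
    exact ⟨(Y', u) :: L', ⟨hY', hu', hL'⟩, by simp [hmap]⟩

variable {r : S}

/-- Under condition (1), a state is in a unique member of `nei a s`. -/
lemma nei_mem_unique (hnei : ∀ (a : AG) (s : S), IsCover (nei a s) (suc s))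
    (h : ∀ (a : AG) (s : S), ∃! L : List (Set S × S), nHist suc nei {a} r L s)
    {a : AG} {s u : S} {X X' : Set S} (hX : X ∈ nei a s) (hX' : X' ∈ nei a s)
    (huX : u ∈ X) (huX' : u ∈ X') : X = X' := by
  obtain ⟨L, hL, -⟩ := h a s
  have h1 := nHist_append hL (mem_dNei_singleton hnei hX) huX
  have h2 := nHist_append hL (mem_dNei_singleton hnei hX') huX'
  have := ((h a u).unique h1 h2)
  have := List.append_inj_right this rfl
  simp only [List.cons.injEq, Prod.mk.injEq] at this
  exact this.1.1

/-- Under condition (1), one-step uniqueness of derived neighborhoods. -/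
lemma dNei_step_unique (hnei : ∀ (a : AG) (s : S), IsCover (nei a s) (suc s))
    (h : ∀ (a : AG) (s : S), ∃! L : List (Set S × S), nHist suc nei {a} r L s)
    {C : Set AG} {s u : S} {Y Y' : Set S}
    (hY : Y ∈ dNei suc nei C s) (hY' : Y' ∈ dNei suc nei C s)
    (huY : u ∈ Y) (huY' : u ∈ Y') : Y = Y' := by
  unfold dNei at hY hY'
  by_cases h0 : suc s = ∅
  · rw [if_pos h0] at hY; exact absurd hY (Set.notMem_empty _)
  · rw [if_neg h0] at hY hY'
    by_cases hC : C = ∅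
    · rw [if_pos hC] at hY hY'
      simp only [Set.mem_singleton_iff] at hY hY'
      rw [hY, hY']
    · rw [if_neg hC] at hY hY'
      obtain ⟨-, X, hX, rfl⟩ := hY
      obtain ⟨-, X', hX', rfl⟩ := hY'
      have : ∀ a : ↥C, X a = X' a := fun a =>
        nei_mem_unique hnei h (hX a) (hX' a)
          (Set.mem_iInter.mp huY a) (Set.mem_iInter.mp huY' a)
      exact Set.iInter_congr this

/-- Histories with the same state path are equal. -/
lemma nHist_eq_of_map_eq (hnei : ∀ (a : AG) (s : S), IsCover (nei a s) (suc s))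
    (h : ∀ (a : AG) (s : S), ∃! L : List (Set S × S), nHist suc nei {a} r L s)
    {C : Set AG} {s s' : S} {L L' : List (Set S × S)}
    (hL : nHist suc nei C s L s') (hL' : nHist suc nei C s L' s')
    (hmap : L.map Prod.snd = L'.map Prod.snd) : L = L' := by
  induction L generalizing s L' with
  | nil =>
    cases L' with
    | nil => rfl
    | cons p T => simp at hmap
  | cons p T ih =>
    cases L' with
    | nil => simp at hmap
    | cons p' T' =>
      obtain ⟨Y, u⟩ := p
      obtain ⟨Y', u'⟩ := p'
      simp only [List.map_cons, List.cons.injEq] at hmap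
      obtain ⟨heq, hmapT⟩ := hmap
      subst heq
      obtain ⟨h1, h2, h3⟩ := hL
      obtain ⟨h1', h2', h3'⟩ := hL'
      have hYY : Y = Y' := dNei_step_unique hnei h h1 h1' h2 h2'
      subst hYY
      rw [ih h3 h3' hmapT]

/-- Under condition (1), unique `C`-histories exist for every coalition. -/
lemma nHist_exists_unique (hnei : ∀ (a : AG) (s : S), IsCover (nei a s) (suc s))
    (h : ∀ (a : AG) (s : S), ∃! L : List (Set S × S), nHist suc nei {a} r L s)
    [Nonempty AG] (C : Set AG) (s : S) :
    ∃! L : List (Set S × S), nHist suc nei C r L s := by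
  obtain ⟨a₀⟩ := ‹Nonempty AG›
  obtain ⟨M, hM, -⟩ := h a₀ s
  obtain ⟨L₀, hL₀, -⟩ := nHist_transfer hnei C hM
  refine ⟨L₀, hL₀, fun L hL => ?_⟩
  obtain ⟨N, hN, hNm⟩ := nHist_transfer hnei {a₀} hL
  obtain ⟨N', hN', hNm'⟩ := nHist_transfer hnei {a₀} hL₀
  have hNN : N = N' := (h a₀ s).unique hN hN'
  exact nHist_eq_of_map_eq hnei h hL hL₀ (by rw [← hNm, hNN, hNm'])

end Aux

/-- For a single-coalition-first neighborhood model the following are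
equivalent: (1) some root has a unique `{a}`-history to every state for every
agent `a`; (2) some root has a unique `C`-history to every state for every
coalition `C`. -/
theorem tree_like_nbhd_two_equivalent_conditions
    {AG S : Type} [Fintype AG] [Nonempty AG] [Nonempty S]
    (suc : S → Set S) (nei : AG → S → Set (Set S))
    (hnei : ∀ (a : AG) (s : S), IsCover (nei a s) (suc s)) :
    (∃ r : S, ∀ (a : AG) (s : S),
      ∃! L : List (Set S × S), nHist suc nei {a} r L s) ↔
    (∃ r : S, ∀ (C : Set AG) (s : S),
      ∃! L : List (Set S × S), nHist suc nei C r L s) := by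
  constructor
  · rintro ⟨r, h⟩
    exact ⟨r, fun C s => nHist_exists_unique hnei h C s⟩
  · rintro ⟨r, h⟩
    exact ⟨r, fun a s => h {a} s⟩
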